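/- arXiv:2207.06123 — 2 statements merged into one kernel-verified Lean document; each statement's English description precedes it below -/
import Mathlib

section
/- Let A ∈ B(H₂, H₃) and B ∈ B(H₁, H₂) have closed ranges and suppose AB has closed range. Then (AB)† AB = B† A† AB if and only if A B B* = A B B* A† A. -/
open ContinuousLinearMap

/-- `X` is the Moore-Penrose inverse of `A`: the four Penrose equations. -/
def IsMPInv {H₁ H₂ : Type*} [NormedAddCommGroup H₁] [InnerProductSpace ℂ H₁]
    [NormedAddCommGroup H₂] [InnerProductSpace ℂ H₂] [CompleteSpace H₁] [CompleteSpace H₂]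
    (A : H₁ →L[ℂ] H₂) (X : H₂ →L[ℂ] H₁) : Prop :=
  A ∘L X ∘L A = A ∧ X ∘L A ∘L X = X ∧
    ContinuousLinearMap.adjoint (A ∘L X) = A ∘L X ∧
    ContinuousLinearMap.adjoint (X ∘L A) = X ∘L A

open scoped InnerProductSpace

/-! Write `P = A†A`, `Q = BB†`, `S = BB*` and `T = B†PB`. Two self-adjoint operators `X`, `T` with
`XT = X` and `TX = T` are equal; for `X = (AB)†AB` the second identity always holds and the first
one is `ABT = AB`, so `X = T` iff `ABT = AB` and `T` is self-adjoint. As `A` is injective on the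
range of `P`, `ABT = AB` says `PQ(PB) = PB`, and a vector fixed by the product `PQ` of two
orthogonal projections is fixed by `Q`; so `ABT = AB` iff `QPB = PB`. On the other side
`ABB* = ABB*P` says `PS = PSP`, i.e. `P` commutes with `S`. The two conditions are matched
through the Penrose identities `B = SB†*` and `B* = B†BB*`. -/

theorem IsSelfAdjoint.eq_of_mul_eq_of_mul_eq {R : Type*} [Mul R] [StarMul R] {x t : R}
    (hx : IsSelfAdjoint x) (ht : IsSelfAdjoint t) (hxt : x * t = x) (htx : t * x = t) :
    x = t :=
  calc x = star (x * t) := by rw [hxt, hx.star_eq]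
    _ = t := by rw [star_mul, hx.star_eq, ht.star_eq, htx]

theorem IsSelfAdjoint.commute_of_mul_eq_mul_mul {R : Type*} [Semigroup R] [StarMul R] {p s : R}
    (hp : IsSelfAdjoint p) (hs : IsSelfAdjoint s) (h : p * s = p * s * p) : Commute p s :=
  calc p * s = p * s * p := h
    _ = star (p * s * p) := by rw [star_mul, star_mul, hp.star_eq, hs.star_eq, mul_assoc]
    _ = s * p := by rw [← h, star_mul, hp.star_eq, hs.star_eq]

theorem ContinuousLinearMap.IsStarProjection.apply_eq_self_of_apply_apply_eq_self
    {𝕜 E : Type*} [RCLike 𝕜] [NormedAddCommGroup E] [InnerProductSpace 𝕜 E] [CompleteSpace E]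
    {P Q : E →L[𝕜] E} (hP : IsStarProjection P) (hQ : IsStarProjection Q) {w : E}
    (h : P (Q w) = w) : Q w = w := by
  have hPs := hP.isSelfAdjoint.isSymmetric
  have hQs := hQ.isSelfAdjoint.isSymmetric
  have hPP : ∀ v, P (P v) = P v := DFunLike.congr_fun hP.isIdempotentElem.eq
  have hQQ : ∀ v, Q (Q v) = Q v := DFunLike.congr_fun hQ.isIdempotentElem.eq
  have hPw : P w = w :=
    calc P w = P (P (Q w)) := by rw [h]
      _ = w := by rw [hPP, h]
  have hQQw : ⟪Q w, Q w⟫_𝕜 = ⟪w, Q w⟫_𝕜 := by rw [← coe_coe, hQs, coe_coe, hQQ]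
  have hQw : ⟪Q w, w⟫_𝕜 = ⟪w, Q w⟫_𝕜 := hQs _ _
  have hww : ⟪w, w⟫_𝕜 = ⟪Q w, w⟫_𝕜 :=
    calc ⟪w, w⟫_𝕜 = ⟪P (Q w), w⟫_𝕜 := by rw [h]
      _ = ⟪Q w, w⟫_𝕜 := by rw [← coe_coe, hPs, coe_coe, hPw]
  -- all four inner products of `w` and `Q w` coincide, so `‖Q w - w‖² = 0`
  rw [← sub_eq_zero, ← inner_self_eq_zero (𝕜 := 𝕜), inner_sub_left, inner_sub_right,
    inner_sub_right, hQQw, hQw, hww, hQw]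
  ring

namespace IsMPInv

variable {E F G : Type*}
  [NormedAddCommGroup E] [InnerProductSpace ℂ E] [CompleteSpace E]
  [NormedAddCommGroup F] [InnerProductSpace ℂ F] [CompleteSpace F]
  [NormedAddCommGroup G] [NormedSpace ℂ G]
  {A : E →L[ℂ] F} {X : F →L[ℂ] E}

theorem isStarProjection_inv_comp (h : IsMPInv A X) : IsStarProjection (X ∘L A) where
  isIdempotentElem := by rw [IsIdempotentElem, mul_def, comp_assoc, h.1]
  isSelfAdjoint := by rw [isSelfAdjoint_iff', h.2.2.2]

theorem isStarProjection_comp_inv (h : IsMPInv A X) : IsStarProjection (A ∘L X) where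
  isIdempotentElem := by rw [IsIdempotentElem, mul_def, comp_assoc, h.2.1]
  isSelfAdjoint := by rw [isSelfAdjoint_iff', h.2.2.1]

theorem comp_adjoint_comp_adjoint (h : IsMPInv A X) : A ∘L adjoint A ∘L adjoint X = A := by
  rw [← adjoint_comp, h.2.2.2, h.1]

theorem adjoint_eq_inv_comp_comp_adjoint (h : IsMPInv A X) :
    adjoint A = X ∘L A ∘L adjoint A := by
  conv_lhs => rw [← h.1]
  rw [adjoint_comp, h.2.2.2, comp_assoc]

theorem inv_comp_eq_comp_iff (h : IsMPInv A X) (Y : F →L[ℂ] E) :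
    X ∘L A = Y ∘L A ↔ A ∘L Y ∘L A = A ∧ IsSelfAdjoint (Y ∘L A) := by
  have hXA := h.isStarProjection_inv_comp.isSelfAdjoint
  refine ⟨fun hXY => ⟨hXY ▸ h.1, hXY ▸ hXA⟩,
    fun ⟨hAYA, hYA⟩ => hXA.eq_of_mul_eq_of_mul_eq hYA ?_ ?_⟩
  · rw [mul_def, comp_assoc, hAYA]
  · rw [mul_def, comp_assoc, h.1]

theorem comp_comp_inv_comp_comp_eq_comp_iff (h : IsMPInv A X) {Q : E →L[ℂ] E}
    (hQ : IsStarProjection Q) (C : G →L[ℂ] E) :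
    A ∘L Q ∘L X ∘L A ∘L C = A ∘L C ↔ Q ∘L X ∘L A ∘L C = X ∘L A ∘L C := by
  refine ⟨fun hC => ?_, fun hC => by rw [hC, ← comp_assoc X, ← comp_assoc A, h.1]⟩
  ext x
  refine IsStarProjection.apply_eq_self_of_apply_apply_eq_self h.isStarProjection_inv_comp hQ ?_
  exact congrArg X (DFunLike.congr_fun hC x)

theorem comp_eq_comp_comp_inv_comp_iff_commute (h : IsMPInv A X) {S : E →L[ℂ] E}
    (hS : IsSelfAdjoint S) : A ∘L S = A ∘L S ∘L X ∘L A ↔ Commute (X ∘L A) S := by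
  refine ⟨fun hAS => h.isStarProjection_inv_comp.isSelfAdjoint.commute_of_mul_eq_mul_mul hS ?_,
    fun hPS => ?_⟩
  · simp only [mul_def, comp_assoc]
    rw [hAS]
  · calc A ∘L S = A ∘L X ∘L A ∘L S := by rw [← comp_assoc X, ← comp_assoc A, h.1]
      _ = A ∘L ((X ∘L A) * S) := by simp only [mul_def, comp_assoc]
      _ = A ∘L S ∘L X ∘L A := by rw [hPS.eq]; rfl

theorem comp_comp_eq_and_isSelfAdjoint_iff_commute (h : IsMPInv A X) {P : F →L[ℂ] F}
    (hP : IsSelfAdjoint P) :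
    (A ∘L X ∘L P ∘L A = P ∘L A ∧ IsSelfAdjoint (X ∘L P ∘L A)) ↔
      Commute P (A ∘L adjoint A) := by
  have hA : ∀ y, A (adjoint A (adjoint X y)) = A y :=
    DFunLike.congr_fun h.comp_adjoint_comp_adjoint
  have hA' : ∀ y, adjoint A y = X (A (adjoint A y)) :=
    DFunLike.congr_fun h.adjoint_eq_inv_comp_comp_adjoint
  have hT :
      IsSelfAdjoint (X ∘L P ∘L A) ↔ ∀ y, adjoint A (P (adjoint X y)) = X (P (A y)) := by
    rw [isSelfAdjoint_iff', adjoint_comp, adjoint_comp, hP.adjoint_eq, ContinuousLinearMap.ext_iff]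
    rfl
  simp only [hT, Commute, SemiconjBy, mul_def, ContinuousLinearMap.ext_iff, comp_apply]
  constructor
  · rintro ⟨hQPA, hTsa⟩ x
    have hPQ : ∀ y, adjoint A (P (adjoint X (adjoint A y))) = adjoint A (P y) := by
      have := congrArg adjoint (ContinuousLinearMap.ext hQPA : A ∘L X ∘L P ∘L A = P ∘L A)
      simp only [adjoint_comp, hP.adjoint_eq] at this
      exact DFunLike.congr_fun this
    calc P (A (adjoint A x)) = A (X (P (A (adjoint A x)))) := (hQPA _).symm
      _ = A (adjoint A (P (adjoint X (adjoint A x)))) := by rw [hTsa]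
      _ = A (adjoint A (P x)) := by rw [hPQ]
  · intro hPS
    refine ⟨?_, fun y => ?_⟩
    · intro x
      calc A (X (P (A x))) = A (X (P (A (adjoint A (adjoint X x))))) := by rw [hA]
        _ = A (adjoint A (P (adjoint X x))) := by rw [hPS, ← hA']
        _ = P (A x) := by rw [← hPS, hA]
    · calc adjoint A (P (adjoint X y)) = X (A (adjoint A (P (adjoint X y)))) := hA' _
        _ = X (P (A y)) := by rw [← hPS, hA]

end IsMPInv

theorem stmt12_general {H₁ H₂ H₃ : Type*}
    [NormedAddCommGroup H₁] [InnerProductSpace ℂ H₁] [CompleteSpace H₁]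
    [NormedAddCommGroup H₂] [InnerProductSpace ℂ H₂] [CompleteSpace H₂]
    [NormedAddCommGroup H₃] [InnerProductSpace ℂ H₃] [CompleteSpace H₃]
    (A : H₂ →L[ℂ] H₃) (B : H₁ →L[ℂ] H₂)
    (Ad : H₃ →L[ℂ] H₂) (Bd : H₂ →L[ℂ] H₁) (ABd : H₃ →L[ℂ] H₁)
    (hA : IsMPInv A Ad) (hB : IsMPInv B Bd) (hAB : IsMPInv (A ∘L B) ABd) :
    ABd ∘L A ∘L B = Bd ∘L Ad ∘L A ∘L B ↔
      A ∘L B ∘L ContinuousLinearMap.adjoint B = A ∘L B ∘L ContinuousLinearMap.adjoint B ∘L Ad ∘L A := by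
  have hQ := hA.comp_comp_inv_comp_comp_eq_comp_iff hB.isStarProjection_comp_inv B
  have hT :=
    hB.comp_comp_eq_and_isSelfAdjoint_iff_commute hA.isStarProjection_inv_comp.isSelfAdjoint
  have hS :=
    hA.comp_eq_comp_comp_inv_comp_iff_commute (isPositive_self_comp_adjoint B).isSelfAdjoint
  rw [← comp_assoc Bd Ad (A ∘L B), hAB.inv_comp_eq_comp_iff]
  simp only [comp_assoc] at hQ hT hS ⊢
  rw [hQ, hT, hS]

theorem stmt12 {H₁ H₂ H₃ : Type*}
    [NormedAddCommGroup H₁] [InnerProductSpace ℂ H₁] [CompleteSpace H₁]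
    [NormedAddCommGroup H₂] [InnerProductSpace ℂ H₂] [CompleteSpace H₂]
    [NormedAddCommGroup H₃] [InnerProductSpace ℂ H₃] [CompleteSpace H₃]
    (A : H₂ →L[ℂ] H₃) (B : H₁ →L[ℂ] H₂)
    (Ad : H₃ →L[ℂ] H₂) (Bd : H₂ →L[ℂ] H₁) (ABd : H₃ →L[ℂ] H₁)
    (hAcl : IsClosed (LinearMap.range (A : H₂ →ₗ[ℂ] H₃) : Set H₃))
    (hBcl : IsClosed (LinearMap.range (B : H₁ →ₗ[ℂ] H₂) : Set H₂))
    (hABcl : IsClosed (LinearMap.range ((A ∘L B : H₁ →L[ℂ] H₃) : H₁ →ₗ[ℂ] H₃) : Set H₃))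
    (hA : IsMPInv A Ad) (hB : IsMPInv B Bd) (hAB : IsMPInv (A ∘L B) ABd) :
    ABd ∘L A ∘L B = Bd ∘L Ad ∘L A ∘L B ↔
      A ∘L B ∘L ContinuousLinearMap.adjoint B = A ∘L B ∘L ContinuousLinearMap.adjoint B ∘L Ad ∘L A :=
  stmt12_general A B Ad Bd ABd hA hB hAB
end

section
/- Let A ∈ B(H₂, H₃) and B ∈ B(H₁, H₂) have closed ranges and suppose AB has closed range. Then A† = B (AB)† if and only if R(A*) = R(B B* A*). -/
/-!
Both directions rest on `R(T*) = R(T†)`. Forward: `R(A*) = R(A†) = B R((AB)†) = B R(B*A*)`.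
Backward: `R(A*) ⊆ R(B)` gives `A = A B B† = (AB) B†`, and `R(BB*A*) ⊆ R(A*)` gives
`A†A B (AB)† = B (AB)†` because `(AB)† = B*A* (AB)†* (AB)†`. With these, `B (AB)†` satisfies the
four Penrose equations for `A`, and the Moore-Penrose inverse is unique.
-/

open ContinuousLinearMap

section RangeLe

variable {R M N P : Type*} [Semiring R]
  [AddCommMonoid M] [Module R M] [TopologicalSpace M]
  [AddCommMonoid N] [Module R N] [TopologicalSpace N]
  [AddCommMonoid P] [Module R P] [TopologicalSpace P]

lemma ContinuousLinearMap.comp_comp_eq_of_range_le {T : M →L[R] N} {X : N →L[R] M}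
    (h : T ∘L X ∘L T = T) {S : P →L[R] N}
    (hS : LinearMap.range (S : P →ₗ[R] N) ≤ LinearMap.range (T : M →ₗ[R] N)) :
    T ∘L X ∘L S = S := by
  ext y
  obtain ⟨x, hx⟩ := hS (LinearMap.mem_range_self (S : P →ₗ[R] N) y)
  simp only [coe_coe] at hx
  simpa only [comp_apply, ← hx] using DFunLike.congr_fun h x

end RangeLe

section MPInv

variable {E F G : Type*} [NormedAddCommGroup E] [InnerProductSpace ℂ E] [CompleteSpace E]
  [NormedAddCommGroup F] [InnerProductSpace ℂ F] [CompleteSpace F]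
  [NormedAddCommGroup G] [InnerProductSpace ℂ G] [CompleteSpace G]

namespace IsMPInv

variable {T : E →L[ℂ] F} {X : F →L[ℂ] E}

lemma comp_comp_adjoint (h : IsMPInv T X) : X ∘L T ∘L adjoint T = adjoint T :=
  calc X ∘L T ∘L adjoint T = adjoint (X ∘L T) ∘L adjoint T := by rw [h.2.2.2, comp_assoc]
    _ = adjoint (T ∘L X ∘L T) := by simp only [adjoint_comp, comp_assoc]
    _ = adjoint T := by rw [h.1]

lemma adjoint_comp_comp (h : IsMPInv T X) : adjoint T ∘L adjoint X ∘L X = X :=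
  calc adjoint T ∘L adjoint X ∘L X = adjoint (X ∘L T) ∘L X := by rw [adjoint_comp, comp_assoc]
    _ = X ∘L T ∘L X := by rw [h.2.2.2, comp_assoc]
    _ = X := h.2.1

lemma range_adjoint (h : IsMPInv T X) :
    LinearMap.range (adjoint T : F →ₗ[ℂ] E) = LinearMap.range (X : F →ₗ[ℂ] E) := by
  apply le_antisymm
  · conv_lhs => rw [← h.comp_comp_adjoint, toLinearMap_comp]
    exact LinearMap.range_comp_le_range _ _
  · conv_lhs => rw [← h.adjoint_comp_comp, toLinearMap_comp]
    exact LinearMap.range_comp_le_range _ _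

lemma comp_eq_comp_left {Y : F →L[ℂ] E} (hX : IsMPInv T X) (hY : IsMPInv T Y) :
    X ∘L T = Y ∘L T :=
  calc X ∘L T = adjoint (T ∘L Y ∘L T) ∘L adjoint X := by rw [hY.1, ← adjoint_comp, hX.2.2.2]
    _ = adjoint (Y ∘L T) ∘L adjoint (X ∘L T) := by simp only [adjoint_comp, comp_assoc]
    _ = Y ∘L T ∘L X ∘L T := by rw [hX.2.2.2, hY.2.2.2, comp_assoc]
    _ = Y ∘L T := by rw [hX.1]

lemma comp_eq_comp_right {Y : F →L[ℂ] E} (hX : IsMPInv T X) (hY : IsMPInv T Y) :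
    T ∘L X = T ∘L Y :=
  calc T ∘L X = adjoint X ∘L adjoint (T ∘L Y ∘L T) := by rw [hY.1, ← adjoint_comp, hX.2.2.1]
    _ = adjoint (T ∘L X) ∘L adjoint (T ∘L Y) := by simp only [adjoint_comp, comp_assoc]
    _ = (T ∘L X ∘L T) ∘L Y := by rw [hX.2.2.1, hY.2.2.1]; simp only [comp_assoc]
    _ = T ∘L Y := by rw [hX.1]

lemma unique {Y : F →L[ℂ] E} (hX : IsMPInv T X) (hY : IsMPInv T Y) : X = Y :=
  calc X = X ∘L T ∘L X := hX.2.1.symm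
    _ = Y ∘L T ∘L Y := by rw [← comp_assoc, hX.comp_eq_comp_left hY, comp_assoc,
      hX.comp_eq_comp_right hY]
    _ = Y := hY.2.1

end IsMPInv

lemma isMPInv_comp_of_range_adjoint_eq {A : F →L[ℂ] G} {B : E →L[ℂ] F} {Ad : G →L[ℂ] F}
    {Bd : F →L[ℂ] E} {ABd : G →L[ℂ] E} (hA : IsMPInv A Ad) (hB : IsMPInv B Bd)
    (hAB : IsMPInv (A ∘L B) ABd)
    (h : LinearMap.range (adjoint A : G →ₗ[ℂ] F) =
      LinearMap.range ((B ∘L adjoint B ∘L adjoint A : G →L[ℂ] F) : G →ₗ[ℂ] F)) :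
    IsMPInv A (B ∘L ABd) := by
  have hBBdA : (B ∘L Bd) ∘L adjoint A = adjoint A := by
    refine comp_comp_eq_of_range_le hB.1 ?_
    rw [h, toLinearMap_comp]
    exact LinearMap.range_comp_le_range _ _
  have hA_eq : (A ∘L B) ∘L Bd = A := by
    have := congrArg adjoint hBBdA
    rwa [adjoint_comp, adjoint_adjoint, hB.2.2.1, ← comp_assoc] at this
  have hAdA : Ad ∘L A ∘L (B ∘L adjoint B ∘L adjoint A) = B ∘L adjoint B ∘L adjoint A := by
    refine comp_comp_eq_of_range_le hA.2.1 ?_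
    rw [← h, hA.range_adjoint]
  have hX : Ad ∘L A ∘L (B ∘L ABd) = B ∘L ABd := by
    have hABd : B ∘L ABd = (B ∘L adjoint B ∘L adjoint A) ∘L (adjoint ABd ∘L ABd) := by
      conv_lhs => rw [← hAB.adjoint_comp_comp]
      simp only [adjoint_comp, comp_assoc]
    rw [hABd, ← comp_assoc A, ← comp_assoc Ad, hAdA]
  have hAXA : A ∘L (B ∘L ABd) ∘L A = A := by
    calc A ∘L (B ∘L ABd) ∘L A = ((A ∘L B) ∘L ABd ∘L (A ∘L B)) ∘L Bd := by
          conv_lhs => enter [2, 2]; rw [← hA_eq]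
          simp only [comp_assoc]
      _ = A := by rw [hAB.1, hA_eq]
  have hXA : (B ∘L ABd) ∘L A = Ad ∘L A := by
    conv_lhs => rw [← hX]
    simp only [comp_assoc] at hAXA ⊢
    rw [hAXA]
  refine ⟨hAXA, ?_, ?_, ?_⟩
  · simpa only [comp_assoc] using congrArg (B ∘L ·) hAB.2.1
  · simpa only [comp_assoc] using hAB.2.2.1
  · rw [hXA]
    exact hA.2.2.2

end MPInv

theorem stmt15_general {H₁ H₂ H₃ : Type*}
    [NormedAddCommGroup H₁] [InnerProductSpace ℂ H₁] [CompleteSpace H₁]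
    [NormedAddCommGroup H₂] [InnerProductSpace ℂ H₂] [CompleteSpace H₂]
    [NormedAddCommGroup H₃] [InnerProductSpace ℂ H₃] [CompleteSpace H₃]
    (A : H₂ →L[ℂ] H₃) (B : H₁ →L[ℂ] H₂)
    (Ad : H₃ →L[ℂ] H₂) (Bd : H₂ →L[ℂ] H₁) (ABd : H₃ →L[ℂ] H₁)
    (hA : IsMPInv A Ad) (hB : IsMPInv B Bd) (hAB : IsMPInv (A ∘L B) ABd) :
    Ad = B ∘L ABd ↔ LinearMap.range ((ContinuousLinearMap.adjoint A : H₃ →L[ℂ] H₂) : H₃ →ₗ[ℂ] H₂) = LinearMap.range ((B ∘L ContinuousLinearMap.adjoint B ∘L ContinuousLinearMap.adjoint A : H₃ →L[ℂ] H₂) : H₃ →ₗ[ℂ] H₂) := by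
  constructor
  · rintro rfl
    rw [hA.range_adjoint, toLinearMap_comp, toLinearMap_comp, LinearMap.range_comp,
      LinearMap.range_comp, ← hAB.range_adjoint, adjoint_comp, toLinearMap_comp]
  · intro h
    exact hA.unique (isMPInv_comp_of_range_adjoint_eq hA hB hAB h)

theorem stmt15 {H₁ H₂ H₃ : Type*}
    [NormedAddCommGroup H₁] [InnerProductSpace ℂ H₁] [CompleteSpace H₁]
    [NormedAddCommGroup H₂] [InnerProductSpace ℂ H₂] [CompleteSpace H₂]
    [NormedAddCommGroup H₃] [InnerProductSpace ℂ H₃] [CompleteSpace H₃]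
    (A : H₂ →L[ℂ] H₃) (B : H₁ →L[ℂ] H₂)
    (Ad : H₃ →L[ℂ] H₂) (Bd : H₂ →L[ℂ] H₁) (ABd : H₃ →L[ℂ] H₁)
    (hAcl : IsClosed (LinearMap.range (A : H₂ →ₗ[ℂ] H₃) : Set H₃))
    (hBcl : IsClosed (LinearMap.range (B : H₁ →ₗ[ℂ] H₂) : Set H₂))
    (hABcl : IsClosed (LinearMap.range ((A ∘L B : H₁ →L[ℂ] H₃) : H₁ →ₗ[ℂ] H₃) : Set H₃))
    (hA : IsMPInv A Ad) (hB : IsMPInv B Bd) (hAB : IsMPInv (A ∘L B) ABd) :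
    Ad = B ∘L ABd ↔ LinearMap.range ((ContinuousLinearMap.adjoint A : H₃ →L[ℂ] H₂) : H₃ →ₗ[ℂ] H₂) = LinearMap.range ((B ∘L ContinuousLinearMap.adjoint B ∘L ContinuousLinearMap.adjoint A : H₃ →L[ℂ] H₂) : H₃ →ₗ[ℂ] H₂) :=
  stmt15_general A B Ad Bd ABd hA hB hAB
end
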